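/- On the cotangent bundle of the 2-sphere, let J1 = s2*p3 - s3*p2, J2 = s3*p1 - s1*p3, J3 = s1*p2 - s2*p1, and define L1 = J3^2 + a1*s2^2/s1^2 + a2*s1^2/s2^2, L2 = J1^2 + a2*s3^2/s2^2 + a3*s2^2/s3^2, L3 = J2^2 + a3*s1^2/s3^2 + a1*s3^2/s1^2, H = L1 + L2 + L3 + a1 + a2 + a3, and R = {L1, L2}. Then, assuming the constraints s1^2 + s2^2 + s3^2 = 1 and s1*p1 + s2*p2 + s3*p3 = 0, the Casimir identity R^2 = 16*L1*L2*L3 - 16*a2*L3^2 - 16*a3*L1^2 - 16*a1*L2^2 + 64*a1*a2*a3 holds. -/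

import Mathlib

/-!
`L2` is `L1` with the coordinates shifted cyclically, `(s1, s2, s3) ↦ (s2, s3, s1)` and likewise
for the momenta, so every partial derivative in `{L1, L2}` is a partial derivative of `L1`.
Since `L1` does not involve `s3, p3` and `L2` does not involve `s1, p1`, only the pairs
`(p2, s2)` survive in the bracket. With `{L1, L2}` in closed form, clearing the denominators
`s1, s2, s3` turns the Casimir relation into a polynomial identity.
-/

/-- Canonical Poisson bracket on phase space (s1, s2, s3, p1, p2, p3). -/
noncomputable def poissonBracket3 (F G : ℝ → ℝ → ℝ → ℝ → ℝ → ℝ → ℝ)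
    (x y z p1 p2 p3 : ℝ) : ℝ :=
    deriv (fun t => F x y z t p2 p3) p1 * deriv (fun t => G t y z p1 p2 p3) x
  + deriv (fun t => F x y z p1 t p3) p2 * deriv (fun t => G x t z p1 p2 p3) y
  + deriv (fun t => F x y z p1 p2 t) p3 * deriv (fun t => G x y t p1 p2 p3) z
  - deriv (fun t => G x y z t p2 p3) p1 * deriv (fun t => F t y z p1 p2 p3) x
  - deriv (fun t => G x y z p1 t p3) p2 * deriv (fun t => F x t z p1 p2 p3) y
  - deriv (fun t => G x y z p1 p2 t) p3 * deriv (fun t => F x y t p1 p2 p3) z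

noncomputable def J1 (s1 s2 s3 p1 p2 p3 : ℝ) : ℝ := s2*p3 - s3*p2
noncomputable def J2 (s1 s2 s3 p1 p2 p3 : ℝ) : ℝ := s3*p1 - s1*p3
noncomputable def J3 (s1 s2 s3 p1 p2 p3 : ℝ) : ℝ := s1*p2 - s2*p1

noncomputable def L1f (a1 a2 : ℝ) (s1 s2 s3 p1 p2 p3 : ℝ) : ℝ :=
  (J3 s1 s2 s3 p1 p2 p3)^2 + a1*s2^2/s1^2 + a2*s1^2/s2^2
noncomputable def L2f (a2 a3 : ℝ) (s1 s2 s3 p1 p2 p3 : ℝ) : ℝ :=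
  (J1 s1 s2 s3 p1 p2 p3)^2 + a2*s3^2/s2^2 + a3*s2^2/s3^2
noncomputable def L3f (a1 a3 : ℝ) (s1 s2 s3 p1 p2 p3 : ℝ) : ℝ :=
  (J2 s1 s2 s3 p1 p2 p3)^2 + a3*s1^2/s3^2 + a1*s3^2/s1^2

theorem hasDerivAt_affine_sq (u v x : ℝ) :
    HasDerivAt (fun t => (u*t + v)^2) (2*u*(u*x + v)) x :=
  ((((hasDerivAt_id' x).const_mul u).add_const v).pow 2).congr_deriv (by push_cast; ring)

theorem hasDerivAt_affine_sq_add_div_sq_add_mul_sq (u v c d : ℝ) {x : ℝ} (hx : x ≠ 0) :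
    HasDerivAt (fun t => (u*t + v)^2 + c/t^2 + d*t^2) (2*u*(u*x + v) - 2*c/x^3 + 2*d*x) x := by
  have hc := (hasDerivAt_const x c).div (hasDerivAt_pow 2 x) (pow_ne_zero 2 hx)
  refine (((hasDerivAt_affine_sq u v x).add hc).add
    ((hasDerivAt_pow 2 x).const_mul d)).congr_deriv ?_
  field_simp
  ring

section L1f

variable (a b s1 s2 s3 p1 p2 p3 : ℝ)

theorem L2f_eq_L1f : L2f a b s1 s2 s3 p1 p2 p3 = L1f a b s2 s3 s1 p2 p3 p1 := by
  simp only [L2f, L1f, J1, J3]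

theorem deriv_L1f_s1 (h1 : s1 ≠ 0) :
    deriv (fun t => L1f a b t s2 s3 p1 p2 p3) s1
      = 2*p2*J3 s1 s2 s3 p1 p2 p3 - 2*a*s2^2/s1^3 + 2*b*s1/s2^2 := by
  have hf : (fun t => L1f a b t s2 s3 p1 p2 p3)
      = fun t => (p2*t + -s2*p1)^2 + a*s2^2/t^2 + b/s2^2*t^2 := by
    funext t; simp only [L1f, J3]; ring
  rw [hf, (hasDerivAt_affine_sq_add_div_sq_add_mul_sq _ _ _ _ h1).deriv, J3]
  ring

theorem deriv_L1f_s2 (h2 : s2 ≠ 0) :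
    deriv (fun t => L1f a b s1 t s3 p1 p2 p3) s2
      = -2*p1*J3 s1 s2 s3 p1 p2 p3 + 2*a*s2/s1^2 - 2*b*s1^2/s2^3 := by
  have hf : (fun t => L1f a b s1 t s3 p1 p2 p3)
      = fun t => (-p1*t + s1*p2)^2 + b*s1^2/t^2 + a/s1^2*t^2 := by
    funext t; simp only [L1f, J3]; ring
  rw [hf, (hasDerivAt_affine_sq_add_div_sq_add_mul_sq _ _ _ _ h2).deriv, J3]
  ring

theorem deriv_L1f_s3 : deriv (fun t => L1f a b s1 s2 t p1 p2 p3) s3 = 0 := by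
  simp [L1f, J3]

theorem deriv_L1f_p1 :
    deriv (fun t => L1f a b s1 s2 s3 t p2 p3) p1 = -2*s2*J3 s1 s2 s3 p1 p2 p3 := by
  have hf : (fun t => L1f a b s1 s2 s3 t p2 p3)
      = fun t => (-s2*t + s1*p2)^2 + (a*s2^2/s1^2 + b*s1^2/s2^2) := by
    funext t; simp only [L1f, J3]; ring
  rw [hf, ((hasDerivAt_affine_sq _ _ _).add_const _).deriv, J3]
  ring

theorem deriv_L1f_p2 :
    deriv (fun t => L1f a b s1 s2 s3 p1 t p3) p2 = 2*s1*J3 s1 s2 s3 p1 p2 p3 := by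
  have hf : (fun t => L1f a b s1 s2 s3 p1 t p3)
      = fun t => (s1*t + -s2*p1)^2 + (a*s2^2/s1^2 + b*s1^2/s2^2) := by
    funext t; simp only [L1f, J3]; ring
  rw [hf, ((hasDerivAt_affine_sq _ _ _).add_const _).deriv, J3]
  ring

theorem deriv_L1f_p3 : deriv (fun t => L1f a b s1 s2 s3 p1 p2 t) p3 = 0 := by
  simp [L1f, J3]

end L1f

theorem poissonBracket3_L1f_L2f (a1 a2 a3 s1 s2 s3 p1 p2 p3 : ℝ) (h2 : s2 ≠ 0) :
    poissonBracket3 (L1f a1 a2) (L2f a2 a3) s1 s2 s3 p1 p2 p3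
      = 2*s1*J3 s1 s2 s3 p1 p2 p3 * (2*p3*J1 s1 s2 s3 p1 p2 p3 - 2*a2*s3^2/s2^3 + 2*a3*s2/s3^2)
        + 2*s3*J1 s1 s2 s3 p1 p2 p3 * (-2*p1*J3 s1 s2 s3 p1 p2 p3 + 2*a1*s2/s1^2
          - 2*a2*s1^2/s2^3) := by
  simp only [poissonBracket3, L2f_eq_L1f, deriv_L1f_s1 _ _ _ _ _ _ _ _ h2,
    deriv_L1f_s2 _ _ _ _ _ _ _ _ h2, deriv_L1f_s3, deriv_L1f_p1, deriv_L1f_p2, deriv_L1f_p3]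
  simp only [J1, J3]
  ring

theorem S9_casimir_general (a1 a2 a3 : ℝ) (s1 s2 s3 p1 p2 p3 : ℝ)
    (h1 : s1 ≠ 0) (h2 : s2 ≠ 0) (h3 : s3 ≠ 0) :
    let L1 := L1f a1 a2 s1 s2 s3 p1 p2 p3
    let L2 := L2f a2 a3 s1 s2 s3 p1 p2 p3
    let L3 := L3f a1 a3 s1 s2 s3 p1 p2 p3
    let H := L1 + L2 + L3 + a1 + a2 + a3
    let R := poissonBracket3 (L1f a1 a2) (L2f a2 a3) s1 s2 s3 p1 p2 p3
    R^2 = 16*L1*L2*L3 - 16*a2*L3^2 - 16*a3*L1^2 - 16*a1*L2^2 + 64*a1*a2*a3 := by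
  intro L1 L2 L3 _ R
  simp only [R, L1, L2, L3, poissonBracket3_L1f_L2f a1 a2 a3 s1 s2 s3 p1 p2 p3 h2,
    L1f, L2f, L3f, J1, J2, J3]
  field_simp
  ring

theorem S9_casimir (a1 a2 a3 : ℝ) (s1 s2 s3 p1 p2 p3 : ℝ)
    (h1 : s1 ≠ 0) (h2 : s2 ≠ 0) (h3 : s3 ≠ 0)
    (hsphere : s1^2 + s2^2 + s3^2 = 1)
    (htangent : s1*p1 + s2*p2 + s3*p3 = 0) :
    let L1 := L1f a1 a2 s1 s2 s3 p1 p2 p3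
    let L2 := L2f a2 a3 s1 s2 s3 p1 p2 p3
    let L3 := L3f a1 a3 s1 s2 s3 p1 p2 p3
    let H := L1 + L2 + L3 + a1 + a2 + a3
    let R := poissonBracket3 (L1f a1 a2) (L2f a2 a3) s1 s2 s3 p1 p2 p3
    R^2 = 16*L1*L2*L3 - 16*a2*L3^2 - 16*a3*L1^2 - 16*a1*L2^2 + 64*a1*a2*a3 :=
  S9_casimir_general a1 a2 a3 s1 s2 s3 p1 p2 p3 h1 h2 h3
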